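/- arXiv:2006.07626 — 2 statements merged into one kernel-verified Lean document; each statement's English description precedes it below -/
import Mathlib

section
/- Let p ∈ [1,2]. For each positive integer k set j_k = 2^{k(k-1)}, and suppose that for each k, H_k is a j_k × j_k real matrix whose entries all have absolute value 1 and whose rows are pairwise orthogonal (equivalently, ∑_{s=1}^{j_k} (H_k)_{rs}(H_k)_{ts} = j_k·δ_{rt}). Define the sequence (x^{(j)})_{j≥1} in the real space ℓ_p by: if j_k ≤ j ≤ 2j_k − 1 for some (necessarily unique) positive integer k, then x^{(j)} = j_k^{−(1/2 + 1/p + 1/k)} · ∑_{s=1}^{j_k} (H_k)_{rs} · e_{j_k + s − 1}, where r = j − j_k + 1; otherwise x^{(j)} = 0. Then the series ∑_j x^{(j)} is unconditionally summable in ℓ_p(ℝ) (the family is summable), and for every ε > 0 one has ∑_{j=1}^∞ ‖x^{(j)}‖_p^{2−ε} = ∞. -/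
open scoped ENNReal Real

open Finset

/-!
In the `k`-th block the vectors `x⁽ʲ⁾` are `c_k = j_k^{-(1/2+1/p+1/k)}` times distinct rows of
`H k`, all written on the same `j_k` coordinates. For any set `t` of indices in that block,
the `ℓ_p` norm on `j_k` coordinates is at most `j_k^{1/p-1/2}` times the `ℓ_2` norm (as `p ≤ 2`),
and the orthogonality of the rows computes the latter, giving
`‖∑_{j ∈ t} x⁽ʲ⁾‖_p ≤ c_k j_k^{1/p-1/2} (#t j_k)^{1/2} ≤ j_k^{-1/k} = 2^{-(k-1)}`,
uniformly in `t`. Since these bounds are summable over `k`, the Cauchy criterion for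
unconditional convergence holds. On the other hand `‖x⁽ʲ⁾‖_p = j_k^{-(1/2+1/k)}`, so the `k`-th
block contributes `j_k^{ε/2-(2-ε)/k} ≥ 1` to `∑ ‖x⁽ʲ⁾‖^{2-ε}` as soon as `k ≥ 4/ε`.
-/

theorem summable_of_norm_sum_fiber_le {α β E : Type*} [NormedAddCommGroup E] [CompleteSpace E]
    {f : α → E} (κ : α → β) (hfin : ∀ k, {j | κ j = k ∧ f j ≠ 0}.Finite) {b : β → ℝ}
    (hb : Summable b)
    (hbound : ∀ k (t : Finset α), (∀ j ∈ t, κ j = k ∧ f j ≠ 0) → ‖∑ j ∈ t, f j‖ ≤ b k) :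
    Summable f := by
  classical
  rw [summable_iff_vanishing_norm] at hb ⊢
  intro ε hε
  obtain ⟨s, hs⟩ := hb ε hε
  have hS : {j | κ j ∈ s ∧ f j ≠ 0}.Finite :=
    (s.finite_toSet.biUnion fun k _ => hfin k).subset fun j ⟨hj, hne⟩ =>
      Set.mem_biUnion hj ⟨rfl, hne⟩
  refine ⟨hS.toFinset, fun t ht => ?_⟩
  set u := t.filter (f · ≠ 0)
  have hu : Disjoint (u.image κ) s := by
    refine disjoint_left.2 fun k hk hks => ?_
    obtain ⟨j, hj, rfl⟩ := mem_image.1 hk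
    rw [mem_filter] at hj
    exact disjoint_left.1 ht hj.1 (hS.mem_toFinset.2 ⟨hks, hj.2⟩)
  calc ‖∑ j ∈ t, f j‖ = ‖∑ k ∈ u.image κ, ∑ j ∈ u with κ j = k, f j‖ := by
        rw [sum_fiberwise_of_maps_to fun j hj => mem_image_of_mem κ hj, sum_filter_ne_zero]
    _ ≤ ∑ k ∈ u.image κ, ‖∑ j ∈ u with κ j = k, f j‖ := norm_sum_le _ _
    _ ≤ ∑ k ∈ u.image κ, b k := sum_le_sum fun k _ => hbound k _ fun j hj => by
        simp only [u, mem_filter] at hj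
        exact ⟨hj.2, hj.1.2⟩
    _ ≤ ‖∑ k ∈ u.image κ, b k‖ := Real.le_norm_self _
    _ < ε := hs _ hu

theorem Real.sum_abs_rpow_le_card_rpow_mul {ι : Type*} (s : Finset ι) (a : ι → ℝ) {q : ℝ}
    (hq0 : 0 < q) (hq2 : q ≤ 2) :
    ∑ i ∈ s, |a i| ^ q ≤ (#s : ℝ) ^ (1 - q / 2) * (∑ i ∈ s, a i ^ 2) ^ (q / 2) := by
  have hpow : ∀ i, (|a i| ^ q) ^ (2 / q) = a i ^ 2 := fun i => by
    rw [← Real.rpow_mul (abs_nonneg _), mul_div_cancel₀ _ hq0.ne', Real.rpow_two, sq_abs]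
  have h := Real.rpow_sum_le_const_mul_sum_rpow s (fun i => |a i| ^ q)
    ((one_le_div hq0).2 hq2)
  simp only [abs_abs, Real.abs_rpow_of_nonneg (abs_nonneg _), hpow] at h
  have hsum : 0 ≤ ∑ i ∈ s, |a i| ^ q := sum_nonneg fun i _ => by positivity
  calc ∑ i ∈ s, |a i| ^ q = ((∑ i ∈ s, |a i| ^ q) ^ (2 / q)) ^ (q / 2) := by
        rw [← Real.rpow_mul hsum, div_mul_div_cancel₀ hq0.ne', div_self two_ne_zero,
          Real.rpow_one]
    _ ≤ ((#s : ℝ) ^ (2 / q - 1) * ∑ i ∈ s, a i ^ 2) ^ (q / 2) := by gcongr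
    _ = (#s : ℝ) ^ (1 - q / 2) * (∑ i ∈ s, a i ^ 2) ^ (q / 2) := by
        rw [Real.mul_rpow (by positivity) (sum_nonneg fun i _ => sq_nonneg _),
          ← Real.rpow_mul (Nat.cast_nonneg _)]
        congr 2
        field_simp

theorem sum_sq_sum_eq_card_mul_of_orthogonal {ι κ : Type*} [DecidableEq ι] (A : ι → κ → ℝ)
    (S : Finset κ) (t : Finset ι) (n : ℝ)
    (horth : ∀ i ∈ t, ∀ i' ∈ t, ∑ s ∈ S, A i s * A i' s = if i = i' then n else 0) :
    ∑ s ∈ S, (∑ i ∈ t, A i s) ^ 2 = #t * n := by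
  calc ∑ s ∈ S, (∑ i ∈ t, A i s) ^ 2 = ∑ i ∈ t, ∑ i' ∈ t, ∑ s ∈ S, A i s * A i' s := by
        simp_rw [sq, sum_mul_sum]
        rw [sum_comm]
        exact sum_congr rfl fun _ _ => sum_comm
    _ = ∑ i ∈ t, n := sum_congr rfl fun i hi => by
        rw [sum_congr rfl (horth i hi), sum_ite_eq, if_pos hi]
    _ = #t * n := by simp

theorem lp.norm_sum_single_comp {α ι E : Type*} [DecidableEq α] [NormedAddCommGroup E]
    {p : ℝ≥0∞} (hp : 0 < p.toReal) {e : ι → α} (he : Function.Injective e) (g : ι → E)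
    (S : Finset ι) :
    ‖∑ s ∈ S, lp.single (E := fun _ => E) p (e s) (g s)‖ ^ p.toReal
      = ∑ s ∈ S, ‖g s‖ ^ p.toReal := by
  simpa [sum_map, he.extend_apply] using
    lp.norm_sum_single hp (Function.extend e g 0) (S.map ⟨e, he⟩)

theorem norm_sum_smul_sum_single_rpow {α ι β : Type*} [DecidableEq α] {p : ℝ≥0∞}
    (hp : 0 < p.toReal) {e : ι → α} (he : Function.Injective e) (S : Finset ι) {c : ℝ}
    (hc : 0 ≤ c) (A : β → ι → ℝ) (t : Finset β) :
    ‖∑ j ∈ t, c • ∑ s ∈ S, A j s • lp.single (E := fun _ => ℝ) p (e s) (1 : ℝ)‖ ^ p.toReal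
      = c ^ p.toReal * ∑ s ∈ S, |∑ j ∈ t, A j s| ^ p.toReal := by
  have hvec : ∑ j ∈ t, c • ∑ s ∈ S, A j s • lp.single (E := fun _ => ℝ) p (e s) (1 : ℝ)
      = ∑ s ∈ S, lp.single p (e s) (c * ∑ j ∈ t, A j s) := by
    simp_rw [smul_sum, smul_smul, ← lp.single_smul, smul_eq_mul, mul_one, mul_sum]
    rw [sum_comm]
    exact sum_congr rfl fun s _ =>
      (map_sum (lp.singleAddMonoidHom (E := fun _ => ℝ) p (e s)) _ _).symm
  rw [hvec, lp.norm_sum_single_comp hp he, mul_sum]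
  refine sum_congr rfl fun s _ => ?_
  rw [Real.norm_eq_abs, abs_mul, Real.mul_rpow (abs_nonneg _) (abs_nonneg _), abs_of_nonneg hc]

theorem le_two_pow_mul_sub_one (k : ℕ) : k ≤ 2 ^ (k * (k - 1)) := by
  rcases Nat.eq_zero_or_pos k with rfl | hk
  · simp
  calc k ≤ 2 ^ (k - 1) := by have := Nat.lt_two_pow_self (n := k - 1); omega
    _ ≤ 2 ^ (k * (k - 1)) := Nat.pow_le_pow_right two_pos (Nat.le_mul_of_pos_left _ hk)

theorem rpow_two_pow_mul_sub_one_neg_inv {k : ℕ} (hk : 0 < k) :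
    ((2 : ℝ) ^ (k * (k - 1))) ^ (-(1 / k : ℝ)) = (1 / 2) ^ (k - 1) := by
  have hexp : ((k * (k - 1) : ℕ) : ℝ) * -(1 / k) = -((k - 1 : ℕ) : ℝ) := by
    push_cast [Nat.cast_sub hk]
    field_simp
  rw [← Real.rpow_natCast, ← Real.rpow_mul zero_le_two, hexp, Real.rpow_neg zero_le_two,
    Real.rpow_natCast, one_div, inv_pow]

def macphailBlock (k : ℕ) : Finset ℕ := Icc (2 ^ (k * (k - 1))) (2 * 2 ^ (k * (k - 1)) - 1)

theorem mem_macphailBlock {k j : ℕ} :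
    j ∈ macphailBlock k ↔ 2 ^ (k * (k - 1)) ≤ j ∧ j ≤ 2 * 2 ^ (k * (k - 1)) - 1 :=
  mem_Icc

theorem card_macphailBlock (k : ℕ) : #(macphailBlock k) = 2 ^ (k * (k - 1)) := by
  have := Nat.one_le_two_pow (n := k * (k - 1))
  rw [macphailBlock, Nat.card_Icc]
  omega

noncomputable def macphailVector (p : ℝ≥0∞) (H : ℕ → ℕ → ℕ → ℝ) (k j : ℕ) :
    lp (fun _ : ℕ => ℝ) p :=
  ((2 ^ (k * (k - 1)) : ℝ) ^ (-(1 / 2 + 1 / p.toReal + 1 / (k : ℝ)))) •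
    ∑ s ∈ Finset.Icc 1 (2 ^ (k * (k - 1))),
      H k (j - 2 ^ (k * (k - 1)) + 1) s •
        lp.single p (2 ^ (k * (k - 1)) + s - 1) (1 : ℝ)

section macphailVector

variable {p : ℝ≥0∞} {H : ℕ → ℕ → ℕ → ℝ} {k : ℕ}

theorem norm_rpow_sum_macphailVector (hq : 0 < p.toReal) (t : Finset ℕ) :
    ‖∑ j ∈ t, macphailVector p H k j‖ ^ p.toReal =
      ((2 ^ (k * (k - 1)) : ℝ) ^ (-(1 / 2 + 1 / p.toReal + 1 / (k : ℝ)))) ^ p.toReal *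
        ∑ s ∈ Icc 1 (2 ^ (k * (k - 1))),
          |∑ j ∈ t, H k (j - 2 ^ (k * (k - 1)) + 1) s| ^ p.toReal :=
  norm_sum_smul_sum_single_rpow hq
    (fun a b h => by have := Nat.one_le_two_pow (n := k * (k - 1)); omega)
    _ (by positivity) _ t

variable [Fact (1 ≤ p)]

theorem norm_sum_macphailVector_le (hq0 : 0 < p.toReal) (hq2 : p.toReal ≤ 2) (hk : 0 < k)
    (hHorth : ∀ r t : ℕ,
      1 ≤ r → r ≤ 2 ^ (k * (k - 1)) → 1 ≤ t → t ≤ 2 ^ (k * (k - 1)) →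
      ∑ s ∈ Finset.Icc 1 (2 ^ (k * (k - 1))), H k r s * H k t s =
        if r = t then (2 ^ (k * (k - 1)) : ℝ) else 0)
    {t : Finset ℕ} (ht : t ⊆ macphailBlock k) :
    ‖∑ j ∈ t, macphailVector p H k j‖ ≤ (1 / 2) ^ (k - 1) := by
  rw [← Real.rpow_le_rpow_iff (norm_nonneg _) (by positivity) hq0,
    norm_rpow_sum_macphailVector hq0, ← rpow_two_pow_mul_sub_one_neg_inv hk]
  set q := p.toReal
  set J : ℕ := 2 ^ (k * (k - 1))
  set Jr : ℝ := 2 ^ (k * (k - 1))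
  have hJ : (J : ℝ) = Jr := by push_cast [J, Jr]; rfl
  have hJr : 0 < Jr := by positivity
  have hJ1 : 1 ≤ J := Nat.one_le_two_pow
  have hrow : ∀ j ∈ t, 1 ≤ j - J + 1 ∧ j - J + 1 ≤ J := fun j hj => by
    have := mem_macphailBlock.1 (ht hj); omega
  have horth : ∑ s ∈ Icc 1 J, (∑ j ∈ t, H k (j - J + 1) s) ^ 2 = #t * Jr :=
    sum_sq_sum_eq_card_mul_of_orthogonal _ _ t Jr fun j hj j' hj' => by
      rw [hHorth _ _ (hrow j hj).1 (hrow j hj).2 (hrow j' hj').1 (hrow j' hj').2]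
      have := mem_macphailBlock.1 (ht hj)
      have := mem_macphailBlock.1 (ht hj')
      congr 1
      exact propext (by omega)
  have hcard : (#t : ℝ) ≤ Jr := by
    rw [← hJ]
    exact_mod_cast (card_le_card ht).trans_eq (card_macphailBlock k)
  calc _ ≤ (Jr ^ (-(1 / 2 + 1 / q + 1 / (k : ℝ)))) ^ q *
        (Jr ^ (1 - q / 2) * (Jr * Jr) ^ (q / 2)) := by
        gcongr
        refine (Real.sum_abs_rpow_le_card_rpow_mul _ _ hq0 hq2).trans ?_
        rw [horth, Nat.card_Icc, Nat.add_sub_cancel, hJ]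
        gcongr
    _ = (Jr ^ (-(1 / k : ℝ))) ^ q := by
        rw [← sq, ← Real.rpow_two]
        simp only [← Real.rpow_mul hJr.le, ← Real.rpow_add hJr]
        congr 1
        field_simp
        ring

theorem norm_macphailVector (hq : 0 < p.toReal)
    (hH1 : ∀ r s : ℕ, 1 ≤ r → r ≤ 2 ^ (k * (k - 1)) → 1 ≤ s → s ≤ 2 ^ (k * (k - 1)) →
      |H k r s| = 1)
    {j : ℕ} (hj : j ∈ macphailBlock k) :
    ‖macphailVector p H k j‖ = (2 ^ (k * (k - 1)) : ℝ) ^ (-(1 / 2 + 1 / (k : ℝ))) := by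
  have h := norm_rpow_sum_macphailVector (H := H) (k := k) hq {j}
  set J : ℕ := 2 ^ (k * (k - 1))
  set Jr : ℝ := 2 ^ (k * (k - 1))
  have hJ : (J : ℝ) = Jr := by push_cast [J, Jr]; rfl
  have hJr : 0 < Jr := by positivity
  have hJ1 : 1 ≤ J := Nat.one_le_two_pow
  have hr := mem_macphailBlock.1 hj
  rw [sum_singleton, sum_congr rfl fun s hs => by
      rw [sum_singleton, hH1 _ _ (by omega) (by omega) (mem_Icc.1 hs).1 (mem_Icc.1 hs).2,
        Real.one_rpow],
    sum_const, Nat.card_Icc, Nat.add_sub_cancel, nsmul_one, hJ] at h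
  refine (Real.rpow_left_inj (norm_nonneg _) (by positivity) hq.ne').1 (h.trans ?_)
  rw [← Real.rpow_mul hJr.le, ← Real.rpow_mul hJr.le]
  nth_rewrite 2 [← Real.rpow_one Jr]
  rw [← Real.rpow_add hJr]
  congr 1
  field_simp
  ring

theorem one_le_sum_norm_macphailVector_rpow (hq : 0 < p.toReal)
    (hH1 : ∀ r s : ℕ, 1 ≤ r → r ≤ 2 ^ (k * (k - 1)) → 1 ≤ s → s ≤ 2 ^ (k * (k - 1)) →
      |H k r s| = 1)
    {ε : ℝ} (hε : 0 < ε) (hk : 4 / ε ≤ k) :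
    1 ≤ ∑ j ∈ macphailBlock k, ‖macphailVector p H k j‖ ^ (2 - ε) := by
  set J : ℕ := 2 ^ (k * (k - 1))
  set Jr : ℝ := 2 ^ (k * (k - 1))
  have hJ : (J : ℝ) = Jr := by push_cast [J, Jr]; rfl
  have hJr : 0 < Jr := by positivity
  have hk0 : (0 : ℝ) < k := lt_of_lt_of_le (by positivity) hk
  rw [sum_congr rfl fun j hj => by rw [norm_macphailVector hq hH1 hj], sum_const,
    card_macphailBlock, nsmul_eq_mul, hJ, ← Real.rpow_mul hJr.le]
  nth_rewrite 1 [← Real.rpow_one Jr]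
  rw [← Real.rpow_add hJr]
  refine Real.one_le_rpow (one_le_pow₀ one_le_two) ?_
  have h4 : 4 ≤ ε * k := (div_le_iff₀' hε).1 hk
  have : 1 + -(1 / 2 + 1 / (k : ℝ)) * (2 - ε) = (ε * k - 4 + 2 * ε) / (2 * k) := by
    field_simp
    ring
  rw [this]
  apply div_nonneg <;> linarith

variable {x : ℕ → lp (fun _ : ℕ => ℝ) p}

theorem summable_of_eq_macphailVector (hq0 : 0 < p.toReal) (hq2 : p.toReal ≤ 2)
    (hHorth : ∀ k : ℕ, 0 < k → ∀ r t : ℕ,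
      1 ≤ r → r ≤ 2 ^ (k * (k - 1)) → 1 ≤ t → t ≤ 2 ^ (k * (k - 1)) →
      ∑ s ∈ Finset.Icc 1 (2 ^ (k * (k - 1))), H k r s * H k t s =
        if r = t then (2 ^ (k * (k - 1)) : ℝ) else 0)
    (hx : ∀ k, 0 < k → ∀ j ∈ macphailBlock k, x j = macphailVector p H k j)
    (hx0 : ∀ j, x j ≠ 0 → ∃ k, 0 < k ∧ j ∈ macphailBlock k) :
    Summable x := by
  choose! κ hκ using hx0
  refine summable_of_norm_sum_fiber_le κ
    (fun k => (macphailBlock k).finite_toSet.subset fun j ⟨hjk, hj⟩ => hjk ▸ (hκ j hj).2)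
    ((summable_nat_add_iff (f := fun k : ℕ => (1 / 2 : ℝ) ^ (k - 1)) 1).1
      (by simpa using summable_geometric_two)) fun k t ht => ?_
  rcases t.eq_empty_or_nonempty with rfl | ⟨j₀, hj₀⟩
  · simp
  have hk : 0 < k := (ht j₀ hj₀).1 ▸ (hκ j₀ (ht j₀ hj₀).2).1
  have hsub : t ⊆ macphailBlock k := fun j hj => (ht j hj).1 ▸ (hκ j (ht j hj).2).2
  rw [sum_congr rfl fun j hj => hx k hk j (hsub hj)]
  exact norm_sum_macphailVector_le hq0 hq2 hk (hHorth k hk) hsub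

theorem not_summable_norm_rpow_of_eq_macphailVector (hq : 0 < p.toReal)
    (hH1 : ∀ k : ℕ, 0 < k → ∀ r s : ℕ,
      1 ≤ r → r ≤ 2 ^ (k * (k - 1)) → 1 ≤ s → s ≤ 2 ^ (k * (k - 1)) →
      |H k r s| = 1)
    (hx : ∀ k, 0 < k → ∀ j ∈ macphailBlock k, x j = macphailVector p H k j)
    {ε : ℝ} (hε : 0 < ε) :
    ¬ Summable (fun j : ℕ => ‖x j‖ ^ (2 - ε)) := by
  intro hsum
  obtain ⟨s, hs⟩ := summable_iff_vanishing_norm.1 hsum 1 one_pos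
  obtain ⟨N, hN⟩ := s.exists_nat_subset_range
  set k := N + ⌈4 / ε⌉₊ + 1
  have hk : 4 / ε ≤ k := (Nat.le_ceil _).trans (by exact_mod_cast (by omega))
  have hdisj : Disjoint (macphailBlock k) s := disjoint_left.2 fun j hj hjs => by
    have := (le_two_pow_mul_sub_one k).trans (mem_macphailBlock.1 hj).1
    have := mem_range.1 (hN hjs)
    omega
  have hsmall := hs _ hdisj
  rw [sum_congr rfl fun j hj => by rw [hx k (by omega) j hj]] at hsmall
  exact (one_le_sum_norm_macphailVector_rpow hq (hH1 k (by omega)) hε hk).not_gt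
    ((Real.le_norm_self _).trans_lt hsmall)

end macphailVector

/-- **Macphail-type construction in the real space `ℓ_p` (Theorem 3.1, abstract form).**
Let `p ∈ [1,2]` and `j_k = 2^{k(k-1)}`.  Given, for each `k`, a `j_k × j_k` real matrix
`H k` with unimodular entries and pairwise orthogonal rows, the sequence
`x⁽ʲ⁾ = j_k^{-(1/2+1/p+1/k)} ∑_{s=1}^{j_k} (H k)_{rs} e_{j_k+s-1}` (for
`j_k ≤ j ≤ 2j_k - 1`, `r = j - j_k + 1`, and `0` otherwise) is unconditionally
summable in `ℓ_p(ℝ)` while `∑_j ‖x⁽ʲ⁾‖^{2-ε} = ∞` for every `ε > 0`. -/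
theorem macphail_construction_real
    (p : ℝ≥0∞) [Fact (1 ≤ p)] (hp2 : p ≤ 2)
    (H : ℕ → ℕ → ℕ → ℝ)
    (hH1 : ∀ k : ℕ, 0 < k → ∀ r s : ℕ,
      1 ≤ r → r ≤ 2 ^ (k * (k - 1)) → 1 ≤ s → s ≤ 2 ^ (k * (k - 1)) →
      |H k r s| = 1)
    (hHorth : ∀ k : ℕ, 0 < k → ∀ r t : ℕ,
      1 ≤ r → r ≤ 2 ^ (k * (k - 1)) → 1 ≤ t → t ≤ 2 ^ (k * (k - 1)) →
      ∑ s ∈ Finset.Icc 1 (2 ^ (k * (k - 1))), H k r s * H k t s =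
        if r = t then (2 ^ (k * (k - 1)) : ℝ) else 0)
    (x : ℕ → lp (fun _ : ℕ => ℝ) p)
    (hx : ∀ k : ℕ, 0 < k → ∀ j : ℕ,
      2 ^ (k * (k - 1)) ≤ j → j ≤ 2 * 2 ^ (k * (k - 1)) - 1 →
      x j = ((2 ^ (k * (k - 1)) : ℝ) ^ (-(1 / 2 + 1 / p.toReal + 1 / (k : ℝ)))) •
        ∑ s ∈ Finset.Icc 1 (2 ^ (k * (k - 1))),
          H k (j - 2 ^ (k * (k - 1)) + 1) s •
            lp.single p (2 ^ (k * (k - 1)) + s - 1) (1 : ℝ))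
    (hx0 : ∀ j : ℕ,
      (¬ ∃ k : ℕ, 0 < k ∧ 2 ^ (k * (k - 1)) ≤ j ∧ j ≤ 2 * 2 ^ (k * (k - 1)) - 1) →
      x j = 0) :
    Summable x ∧ ∀ ε : ℝ, 0 < ε → ¬ Summable (fun j : ℕ => ‖x j‖ ^ (2 - ε)) := by
  have hp : p ≠ ∞ := ne_top_of_le_ne_top ENNReal.ofNat_ne_top hp2
  have hq0 : 0 < p.toReal := ENNReal.toReal_pos (zero_lt_one.trans_le Fact.out).ne' hp
  have hq2 : p.toReal ≤ 2 := by simpa using ENNReal.toReal_mono ENNReal.ofNat_ne_top hp2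
  have hxk : ∀ k, 0 < k → ∀ j ∈ macphailBlock k, x j = macphailVector p H k j :=
    fun k hk j hj => hx k hk j (mem_macphailBlock.1 hj).1 (mem_macphailBlock.1 hj).2
  refine ⟨summable_of_eq_macphailVector hq0 hq2 hHorth hxk fun j hj => ?_,
    fun ε hε => not_summable_norm_rpow_of_eq_macphailVector hq0 hH1 hxk hε⟩
  by_contra hblock
  exact hj (hx0 j fun ⟨k, hk, hjk⟩ => hblock ⟨k, hk, mem_macphailBlock.2 hjk⟩)
end

section
/- Let p ∈ [1,2]. The Macphail constant of ℓ_p is zero: for every δ > 0 there exist a positive integer n and vectors x_1,…,x_n in ℓ_p, not all zero, such that sup{ ‖∑_{i∈σ} x_i‖_p : σ ⊆ {1,…,n} } < δ · ∑_{i=1}^{n} ‖x_i‖_p. In particular μ(ℓ_1) = 0. -/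
/-!
Fix `m` and let `ε_1, …, ε_m` be the Rademacher functions on the `2^m` sign patterns, scaled by
`2^(-m/p)` so that each is a unit vector of `ℓ_p`. Orthogonality of the `ε_i` gives
`∑_{i∈σ} ε_i` the normalised `L_2` norm `√|σ|`, and for `p ≤ 2` the power mean inequality bounds
the normalised `L_p` norm by the `L_2` norm. Hence every subset sum has norm at most `√m`, while
`∑ ‖ε_i‖ = m`; letting `m → ∞` the ratio tends to `0`.
-/

open scoped ENNReal symmDiff
open Finset

lemma Real.sum_mul_abs_rpow_le_rpow_sum_mul_sq {ι : Type*} (s : Finset ι) (w z : ι → ℝ)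
    (hw : ∀ i ∈ s, 0 ≤ w i) (hw' : ∑ i ∈ s, w i = 1) {q : ℝ} (hq : 0 < q) (hq2 : q ≤ 2) :
    ∑ i ∈ s, w i * |z i| ^ q ≤ (∑ i ∈ s, w i * z i ^ 2) ^ (q / 2) := by
  have hpow : ∀ i, (|z i| ^ q) ^ (2 / q) = z i ^ 2 := fun i => by
    rw [← Real.rpow_mul (abs_nonneg _), mul_div_cancel₀ _ hq.ne', Real.rpow_two, sq_abs]
  have := Real.arith_mean_le_rpow_mean s w (fun i => |z i| ^ q) hw hw'
    (fun i _ => by positivity) (p := 2 / q) (by rw [le_div_iff₀ hq]; linarith)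
  simpa only [hpow, one_div_div] using this

lemma lp.norm_rpow_sum_single_comp {α β E : Type*} [DecidableEq α] [NormedAddCommGroup E]
    {p : ℝ≥0∞} (hp : 0 < p.toReal) {e : β → α} (he : Function.Injective e) (g : β → E)
    (s : Finset β) :
    ‖∑ b ∈ s, lp.single (E := fun _ => E) p (e b) (g b)‖ ^ p.toReal
      = ∑ b ∈ s, ‖g b‖ ^ p.toReal := by
  have := lp.norm_sum_single (E := fun _ => E) hp (Function.extend e g 0) (s.image e)
  simpa only [sum_image fun a _ b _ h => he h, he.extend_apply] using this

section Rademacher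

variable {ι : Type*} [DecidableEq ι]

def rademacher (s : Finset ι) (i : ι) : ℝ := if i ∈ s then 1 else -1

lemma abs_rademacher (s : Finset ι) (i : ι) : |rademacher s i| = 1 := by
  unfold rademacher; split_ifs <;> simp

lemma rademacher_mul_self (s : Finset ι) (i : ι) : rademacher s i * rademacher s i = 1 := by
  unfold rademacher; split_ifs <;> simp

lemma rademacher_symmDiff_singleton (s : Finset ι) (i : ι) :
    rademacher (s ∆ {i}) i = -rademacher s i := by
  unfold rademacher; by_cases h : i ∈ s <;> simp [mem_symmDiff, h]

lemma rademacher_symmDiff_singleton_of_ne (s : Finset ι) {i j : ι} (hij : i ≠ j) :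
    rademacher (s ∆ {i}) j = rademacher s j := by
  simp [rademacher, mem_symmDiff, hij.symm]

variable [Fintype ι]

lemma sum_rademacher_mul_rademacher_of_ne {i j : ι} (hij : i ≠ j) :
    ∑ s : Finset ι, rademacher s i * rademacher s j = 0 :=
  sum_ninvolution (· ∆ {i})
    (fun s => by
      rw [rademacher_symmDiff_singleton, rademacher_symmDiff_singleton_of_ne s hij]; ring)
    (fun s _ => by simp [symmDiff_eq_left])
    (fun _ => mem_univ _) (fun s => symmDiff_symmDiff_cancel_right _ _)

lemma sum_sq_sum_rademacher (σ : Finset ι) :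
    ∑ s : Finset ι, (∑ i ∈ σ, rademacher s i) ^ 2 = 2 ^ Fintype.card ι * #σ := by
  calc ∑ s : Finset ι, (∑ i ∈ σ, rademacher s i) ^ 2
      = ∑ i ∈ σ, ∑ j ∈ σ, ∑ s : Finset ι, rademacher s i * rademacher s j := by
        simp_rw [sq, sum_mul_sum]
        rw [sum_comm]
        exact sum_congr rfl fun i _ => sum_comm
    _ = ∑ i ∈ σ, ∑ s : Finset ι, rademacher s i * rademacher s i := by
        refine sum_congr rfl fun i hi => sum_eq_single_of_mem i hi fun j _ hji => ?_
        exact sum_rademacher_mul_rademacher_of_ne (Ne.symm hji)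
    _ = 2 ^ Fintype.card ι * #σ := by
        simp [rademacher_mul_self, Fintype.card_finset, mul_comm]

end Rademacher

section RademacherVector

variable (p : ℝ≥0∞) (ι : Type*) [Fintype ι] [DecidableEq ι] [Encodable ι]

/-- The coordinate `encode s` carries the value of the `i`-th Rademacher function at the sign
pattern `s`. -/
noncomputable def rademacherVector (i : ι) : lp (fun _ : ℕ => ℝ) p :=
  ∑ s : Finset ι, lp.single p (Encodable.encode s)
    (((2 : ℝ) ^ Fintype.card ι) ^ (-p.toReal⁻¹) * rademacher s i)

variable {p ι}

lemma sum_rademacherVector (σ : Finset ι) :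
    ∑ i ∈ σ, rademacherVector p ι i = ∑ s : Finset ι, lp.single p (Encodable.encode s)
      (((2 : ℝ) ^ Fintype.card ι) ^ (-p.toReal⁻¹) * ∑ i ∈ σ, rademacher s i) := by
  simp only [rademacherVector, mul_sum]
  rw [sum_comm]
  exact sum_congr rfl fun s _ =>
    (map_sum (lp.singleAddMonoidHom (E := fun _ : ℕ => ℝ) p (Encodable.encode s)) _ _).symm

lemma norm_rpow_sum_rademacherVector (hp : 0 < p.toReal) (σ : Finset ι) :
    ‖∑ i ∈ σ, rademacherVector p ι i‖ ^ p.toReal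
      = ∑ s : Finset ι, ((2 : ℝ) ^ Fintype.card ι)⁻¹ * |∑ i ∈ σ, rademacher s i| ^ p.toReal := by
  have hc0 : (0 : ℝ) < ((2 : ℝ) ^ Fintype.card ι) ^ (-p.toReal⁻¹) := by positivity
  have hc : (((2 : ℝ) ^ Fintype.card ι) ^ (-p.toReal⁻¹)) ^ p.toReal
      = ((2 : ℝ) ^ Fintype.card ι)⁻¹ := by
    rw [← Real.rpow_mul (by positivity), neg_mul, inv_mul_cancel₀ hp.ne', Real.rpow_neg_one]
  rw [sum_rademacherVector, lp.norm_rpow_sum_single_comp hp Encodable.encode_injective]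
  refine sum_congr rfl fun s _ => ?_
  rw [Real.norm_eq_abs, abs_mul, abs_of_pos hc0, Real.mul_rpow hc0.le (abs_nonneg _), hc]

lemma norm_rademacherVector (hp : 0 < p.toReal) (i : ι) : ‖rademacherVector p ι i‖ = 1 := by
  have h := norm_rpow_sum_rademacherVector hp {i}
  simp only [sum_singleton, abs_rademacher, Real.one_rpow, mul_one, sum_const, card_univ,
    Fintype.card_finset, nsmul_eq_mul] at h
  rwa [Nat.cast_pow, Nat.cast_ofNat, mul_inv_cancel₀ (by positivity), ← Real.one_rpow p.toReal,
    Real.rpow_left_inj (lp.norm_nonneg' _) zero_le_one hp.ne'] at h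

lemma norm_sum_rademacherVector_le (hp : 0 < p.toReal) (hp2 : p.toReal ≤ 2) (σ : Finset ι) :
    ‖∑ i ∈ σ, rademacherVector p ι i‖ ≤ √(#σ : ℝ) := by
  have hw : ∑ _s : Finset ι, ((2 : ℝ) ^ Fintype.card ι)⁻¹ = 1 := by
    simp [Fintype.card_finset]
  have key := Real.sum_mul_abs_rpow_le_rpow_sum_mul_sq univ _ (fun s => ∑ i ∈ σ, rademacher s i)
    (fun _ _ => by positivity) hw hp hp2
  rw [← norm_rpow_sum_rademacherVector hp, ← mul_sum, sum_sq_sum_rademacher,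
    inv_mul_cancel_left₀ (by positivity)] at key
  rw [← Real.rpow_le_rpow_iff (lp.norm_nonneg' _) (Real.sqrt_nonneg _) hp, Real.sqrt_eq_rpow,
    ← Real.rpow_mul (Nat.cast_nonneg _)]
  convert key using 2
  ring

end RademacherVector

lemma exists_pos_sqrt_lt_mul {δ : ℝ} (hδ : 0 < δ) : ∃ m : ℕ, 0 < m ∧ √(m : ℝ) < δ * m := by
  obtain ⟨m, hm⟩ := exists_nat_gt (δ⁻¹ ^ 2)
  have hm0 : (0 : ℝ) < m := lt_trans (by positivity) hm
  have hsqrt : δ⁻¹ < √(m : ℝ) := (Real.lt_sqrt (by positivity)).2 hm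
  have hone : 1 < δ * √(m : ℝ) := by rwa [← inv_lt_iff_one_lt_mul₀' hδ]
  refine ⟨m, by exact_mod_cast hm0, ?_⟩
  nlinarith [Real.mul_self_sqrt hm0.le, Real.sqrt_pos.2 hm0]

/-- **Macphail's theorem for `ℓ_p`, `1 ≤ p ≤ 2` (in particular `μ(ℓ_1) = 0`).**
For every `δ > 0` there are finitely many vectors `x_1, …, x_n` in `ℓ_p`, not all
zero, with `sup_{σ ⊆ {1,…,n}} ‖∑_{i∈σ} x_i‖ < δ · ∑_{i=1}^n ‖x_i‖`; that is, the
Macphail constant of `ℓ_p` is zero. -/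
theorem macphail_constant_lp_eq_zero
    (p : ℝ≥0∞) [Fact (1 ≤ p)] (hp2 : p ≤ 2) (δ : ℝ) (hδ : 0 < δ) :
    ∃ (n : ℕ) (_ : 0 < n) (x : Fin n → lp (fun _ : ℕ => ℝ) p),
      (∃ i, x i ≠ 0) ∧
      ∀ σ : Finset (Fin n), ‖∑ i ∈ σ, x i‖ < δ * ∑ i : Fin n, ‖x i‖ := by
  have hp : 0 < p.toReal :=
    ENNReal.toReal_pos (zero_lt_one.trans_le Fact.out).ne' (ne_top_of_le_ne_top (by simp) hp2)
  have hp2' : p.toReal ≤ 2 := by simpa using ENNReal.toReal_mono (by simp) hp2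
  obtain ⟨m, hm, hmδ⟩ := exists_pos_sqrt_lt_mul hδ
  refine ⟨m, hm, rademacherVector p (Fin m), ⟨⟨0, hm⟩, ?_⟩, fun σ => ?_⟩
  · rw [← norm_ne_zero_iff, norm_rademacherVector hp]
    exact one_ne_zero
  calc ‖∑ i ∈ σ, rademacherVector p (Fin m) i‖ ≤ √(#σ : ℝ) :=
        norm_sum_rademacherVector_le hp hp2' σ
    _ ≤ √(m : ℝ) := Real.sqrt_le_sqrt (by simpa using card_le_univ σ)
    _ < δ * m := hmδ
    _ = δ * ∑ i, ‖rademacherVector p (Fin m) i‖ := by simp [norm_rademacherVector hp]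
end
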